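/- The pair (E, p) is logically contextual if and only if (E, p) witnesses a logical Hardy-type paradox. -/

import Mathlib

/-!
Whether `(E, p)` is logically contextual depends only on which events have positive
probability, so it is a statement about the possible supports `S ⊆ Λ` of a distribution:
`(E, p)` is not contextual iff some nonempty `S` meets exactly the events of positive
probability. A Hardy paradox rules such an `S` out: a point of `S` in `eₖ` must lie in every
`eᵢ` with `p eᵢ = 1`, since `eᵢᶜ` has probability zero. Conversely, take for `S` the states
lying in no null event of `E`. If some event `e` of positive probability missed `S`, the
finitely many null events `f ∈ E` would cover `e`, and `e` together with their complements
(all of probability one) would be a Hardy paradox.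
-/

/-- The probability that a distribution `q` on the finite set `Λ` of deterministic states
assigns to a subset `S ⊆ Λ`: `q(S) = ∑_{l ∈ S} q l`. -/
noncomputable def setSum {Λ : Type*} [Fintype Λ] (q : Λ → ℝ) (S : Set Λ) : ℝ :=
  ∑ l, S.indicator q l

/-- `(E, p)` is logically contextual if there is no probability distribution `q` on `Λ`
such that for every `e ∈ E`, `q(e) > 0` iff `p e > 0`. -/
def IsLogicallyContextual {Λ : Type*} [Fintype Λ] (E : Set (Set Λ)) (p : Set Λ → ℝ) : Prop :=
  ¬ ∃ q : Λ → ℝ, (∀ l, 0 ≤ q l) ∧ (∑ l, q l) = 1 ∧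
      ∀ e ∈ E, (0 < setSum q e ↔ 0 < p e)

/-- `(E, p)` witnesses a logical Hardy-type paradox if there exist finitely many sets
`e₁, …, eₙ ∈ E` (`n ≥ 1`) with `e₁ ∩ ⋯ ∩ eₙ = ∅` and an index `k` such that
`p eₖ > 0` and `p eᵢ = 1` for all `i ≠ k`. -/
def WitnessesLogicalHardy {Λ : Type*} (E : Set (Set Λ)) (p : Set Λ → ℝ) : Prop :=
  ∃ n : ℕ, 1 ≤ n ∧ ∃ e : Fin n → Set Λ,
    (∀ i, e i ∈ E) ∧ (⋂ i, e i) = ∅ ∧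
    ∃ k : Fin n, 0 < p (e k) ∧ ∀ i ≠ k, p (e i) = 1

/-- `(E, p)` is strongly contextual if for every deterministic state `l ∈ Λ` there exists
`e ∈ E` with `l ∈ e` and `p e = 0`. -/
def IsStronglyContextual {Λ : Type*} (E : Set (Set Λ)) (p : Set Λ → ℝ) : Prop :=
  ∀ l : Λ, ∃ e ∈ E, l ∈ e ∧ p e = 0

open Set

section

variable {Λ : Type*} {E : Set (Set Λ)} {p : Set Λ → ℝ}

lemma setSum_pos_iff [Fintype Λ] {q : Λ → ℝ} (hq : ∀ l, 0 ≤ q l) (S : Set Λ) :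
    0 < setSum q S ↔ ∃ l ∈ S, 0 < q l := by
  classical
  rw [setSum, Finset.sum_indicator_eq_sum_filter, Finset.sum_pos_iff_of_nonneg fun l _ => hq l]
  simp

lemma exists_distribution_pos_iff_mem [Fintype Λ] {S : Set Λ} (hS : S.Nonempty) :
    ∃ q : Λ → ℝ, (∀ l, 0 ≤ q l) ∧ ∑ l, q l = 1 ∧ ∀ l, 0 < q l ↔ l ∈ S := by
  classical
  have hcard : (0 : ℝ) < S.ncard := by exact_mod_cast (ncard_pos S.toFinite).2 hS
  refine ⟨S.indicator fun _ => (S.ncard : ℝ)⁻¹, fun l => ?_, ?_, fun l => ?_⟩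
  · exact indicator_nonneg (fun _ _ => by positivity) l
  · calc ∑ l, S.indicator (fun _ => (S.ncard : ℝ)⁻¹) l = S.ncard * (S.ncard : ℝ)⁻¹ := by
          rw [Finset.sum_indicator_eq_sum_filter, Finset.sum_const, nsmul_eq_mul,
            ncard_eq_toFinset_card', toFinset_card, Fintype.card_subtype]
      _ = 1 := mul_inv_cancel₀ hcard.ne'
  · by_cases hl : l ∈ S <;> simp [hl, hcard]

theorem not_isLogicallyContextual_iff_exists_support [Fintype Λ] :
    ¬ IsLogicallyContextual E p ↔
      ∃ S : Set Λ, S.Nonempty ∧ ∀ e ∈ E, ((e ∩ S).Nonempty ↔ 0 < p e) := by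
  rw [IsLogicallyContextual, not_not]
  constructor
  · rintro ⟨q, hq0, hq1, hq⟩
    refine ⟨{l | 0 < q l}, ?_, fun e he => ?_⟩
    · obtain ⟨l, -, hl⟩ := (Finset.sum_pos_iff_of_nonneg fun l _ => hq0 l).1 (hq1 ▸ one_pos)
      exact ⟨l, hl⟩
    · rw [← hq e he, setSum_pos_iff hq0]
      rfl
  · rintro ⟨S, hS, hSp⟩
    obtain ⟨q, hq0, hq1, hqS⟩ := exists_distribution_pos_iff_mem hS
    refine ⟨q, hq0, hq1, fun e he => ?_⟩
    simp only [setSum_pos_iff hq0, hqS, ← hSp e he]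
    rfl

lemma witnessesLogicalHardy_of_finite {ι : Type*} [Finite ι] (e : ι → Set Λ) (k : ι)
    (he : ∀ i, e i ∈ E) (hinter : ⋂ i, e i = ∅) (hk : 0 < p (e k))
    (hone : ∀ i ≠ k, p (e i) = 1) : WitnessesLogicalHardy E p := by
  obtain ⟨n, ⟨σ⟩⟩ := Finite.exists_equiv_fin ι
  refine ⟨n, Fin.pos (σ k), e ∘ σ.symm, fun i => he _, ?_, σ k, by simpa using hk,
    fun i hi => hone _ fun h => hi ?_⟩
  · rw [← hinter]
    exact σ.symm.surjective.iInter_comp e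
  · simp [← h]

lemma witnessesLogicalHardy_of_subset_null_cover [Finite Λ] (hcompl : ∀ e ∈ E, eᶜ ∈ E)
    (hpc : ∀ e ∈ E, p eᶜ = 1 - p e) {e : Set Λ} (he : e ∈ E) (hpe : 0 < p e)
    (hcover : ∀ l ∈ e, ∃ f ∈ E, l ∈ f ∧ p f = 0) : WitnessesLogicalHardy E p := by
  refine witnessesLogicalHardy_of_finite (ι := Option {f // f ∈ E ∧ p f = 0})
    (fun o => o.elim e fun f => (f : Set Λ)ᶜ) none ?_ ?_ hpe ?_
  · rintro (_ | ⟨f, hf, -⟩)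
    exacts [he, hcompl f hf]
  · refine eq_empty_of_forall_notMem fun l hl => ?_
    rw [iInter_option, mem_inter_iff, mem_iInter] at hl
    obtain ⟨f, hf, hlf, hpf⟩ := hcover l hl.1
    exact hl.2 ⟨f, hf, hpf⟩ hlf
  · rintro (_ | ⟨f, hf, hpf⟩) hne
    · exact absurd rfl hne
    · simp [hpc f hf, hpf]

def consistentStates (E : Set (Set Λ)) (p : Set Λ → ℝ) : Set Λ :=
  {l | ∀ f ∈ E, l ∈ f → 0 < p f}

lemma inter_consistentStates_nonempty [Finite Λ] (hcompl : ∀ e ∈ E, eᶜ ∈ E)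
    (hp0 : ∀ e ∈ E, 0 ≤ p e) (hpc : ∀ e ∈ E, p eᶜ = 1 - p e)
    (hH : ¬ WitnessesLogicalHardy E p) {e : Set Λ} (he : e ∈ E) (hpe : 0 < p e) :
    (e ∩ consistentStates E p).Nonempty := by
  by_contra h
  refine hH (witnessesLogicalHardy_of_subset_null_cover hcompl hpc he hpe fun l hl => ?_)
  have hl' : l ∉ consistentStates E p := fun hc => h ⟨l, hl, hc⟩
  simp only [consistentStates, mem_ofPred_eq, not_forall, not_lt] at hl'
  obtain ⟨f, hf, hlf, hpf⟩ := hl'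
  exact ⟨f, hf, hlf, hpf.antisymm (hp0 f hf)⟩

lemma isLogicallyContextual_of_witnessesLogicalHardy [Fintype Λ] (hcompl : ∀ e ∈ E, eᶜ ∈ E)
    (hpc : ∀ e ∈ E, p eᶜ = 1 - p e) (hH : WitnessesLogicalHardy E p) :
    IsLogicallyContextual E p := by
  by_contra hq
  obtain ⟨S, -, hS⟩ := not_isLogicallyContextual_iff_exists_support.1 hq
  obtain ⟨n, -, e, heE, hinter, k, hk, hone⟩ := hH
  obtain ⟨l, hlk, hlS⟩ := (hS _ (heE k)).2 hk
  have hl : ∀ i, l ∈ e i := by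
    intro i
    by_cases hi : i = k
    · exact hi ▸ hlk
    by_contra hli
    have := (hS _ (hcompl _ (heE i))).1 ⟨l, hli, hlS⟩
    simp [hpc _ (heE i), hone i hi] at this
  simpa [hinter] using mem_iInter.2 hl

lemma witnessesLogicalHardy_of_isLogicallyContextual [Fintype Λ] (hE : E.Nonempty)
    (hcompl : ∀ e ∈ E, eᶜ ∈ E) (hp0 : ∀ e ∈ E, 0 ≤ p e) (hpc : ∀ e ∈ E, p eᶜ = 1 - p e)
    (hctx : IsLogicallyContextual E p) : WitnessesLogicalHardy E p := by
  by_contra hH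
  have hmeet : ∀ f ∈ E, 0 < p f → (f ∩ consistentStates E p).Nonempty :=
    fun f hf => inter_consistentStates_nonempty hcompl hp0 hpc hH hf
  have hne : (consistentStates E p).Nonempty := by
    obtain ⟨e, he⟩ := hE
    rcases (hp0 e he).lt_or_eq with hpe | hpe
    · exact (hmeet e he hpe).mono inter_subset_right
    · refine (hmeet eᶜ (hcompl e he) ?_).mono inter_subset_right
      rw [hpc e he, ← hpe]
      norm_num
  exact not_isLogicallyContextual_iff_exists_support.2
    ⟨consistentStates E p, hne, fun f hf => ⟨fun ⟨l, hlf, hl⟩ => hl f hf hlf, hmeet f hf⟩⟩ hctx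

end

theorem logicallyContextual_iff_witnessesLogicalHardy_general {Λ : Type*} [Fintype Λ]
    (E : Set (Set Λ)) (hE : E.Nonempty) (hcompl : ∀ e ∈ E, eᶜ ∈ E)
    (p : Set Λ → ℝ) (hp0 : ∀ e ∈ E, 0 ≤ p e)
    (hpc : ∀ e ∈ E, p eᶜ = 1 - p e) :
    IsLogicallyContextual E p ↔ WitnessesLogicalHardy E p :=
  ⟨witnessesLogicalHardy_of_isLogicallyContextual hE hcompl hp0 hpc,
    isLogicallyContextual_of_witnessesLogicalHardy hcompl hpc⟩

/-- A general system `(E, p)` is logically contextual iff it witnesses a logical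
Hardy-type paradox. -/
theorem logicallyContextual_iff_witnessesLogicalHardy {Λ : Type*} [Fintype Λ] [Nonempty Λ]
    (E : Set (Set Λ)) (hE : E.Nonempty) (hcompl : ∀ e ∈ E, eᶜ ∈ E)
    (p : Set Λ → ℝ) (hp0 : ∀ e ∈ E, 0 ≤ p e) (hp1 : ∀ e ∈ E, p e ≤ 1)
    (hpc : ∀ e ∈ E, p eᶜ = 1 - p e) :
    IsLogicallyContextual E p ↔ WitnessesLogicalHardy E p :=
  logicallyContextual_iff_witnessesLogicalHardy_general E hE hcompl p hp0 hpc
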